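/- Fix n > 1. The kernel of Φ_n : V(n)ⁿ → W(n) has dimension C(n,3), and the C(n,3) vectors v_{(abc)} for 1 ≤ a < b < c ≤ n form a basis of ker(Φ_n). -/
import Mathlib


open Submodule

/-- Index type for the distinguished basis of `V(n)`: pairs `(j,i)` with `i < j`. -/
abbrev VIdx (n : ℕ) := {q : Fin n × Fin n // q.2 < q.1}

/-- Index type for the distinguished basis of `W(n)`: triples `(j,i,k)` with `i < j`, `i ≤ k`. -/
abbrev WIdx (n : ℕ) := {t : Fin n × Fin n × Fin n // t.2.1 < t.1 ∧ t.2.1 ≤ t.2.2}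

/-- The vector space `V(n)` over `F`. -/
abbrev V (F : Type*) [Field F] (n : ℕ) := VIdx n → F

/-- The vector space `W(n)` over `F`. -/
abbrev W (F : Type*) [Field F] (n : ℕ) := WIdx n → F

variable (F : Type*) [Field F] (n : ℕ)

/-- The vector `v[j,i]`, with the conventions `v[i,j] = -v[j,i]` and `v[i,i] = 0`. -/
noncomputable def v (j i : Fin n) : V F n :=
  if h : i < j then Pi.single (⟨(j, i), h⟩ : VIdx n) 1
  else if h' : j < i then -Pi.single (⟨(i, j), h'⟩ : VIdx n) 1
  else 0

/-- The vector `w[j,i,k]` (the basis vector when `i < j` and `i ≤ k`, zero otherwise). -/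
noncomputable def w (j i k : Fin n) : W F n :=
  if h : i < j ∧ i ≤ k then Pi.single (⟨(j, i, k), h⟩ : WIdx n) 1 else 0

/-- The linear map `φ_k : V(n) → W(n)` determined on basis vectors by
`φ_k(v[j,i]) = w[j,i,k]` if `i ≤ k`, and `φ_k(v[j,i]) = w[j,k,i] - w[i,k,j]` if `k < i`. -/
noncomputable def phi (k : Fin n) : V F n →ₗ[F] W F n :=
  (Pi.basisFun F (VIdx n)).constr F fun q =>
    if q.1.2 ≤ k then w F n q.1.1 q.1.2 k
    else w F n q.1.1 k q.1.2 - w F n q.1.2 k q.1.1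

/-- The linear map `Φ_n : V(n)ⁿ → W(n)`, `Φ_n(x₁,…,x_n) = φ₁(x₁) + ⋯ + φ_n(x_n)`. -/
noncomputable def Phi : (Fin n → V F n) →ₗ[F] W F n :=
  ∑ k : Fin n, (phi F n k).comp (LinearMap.proj k)

/-- For `X ≤ V(n)`, the subspace `X* ≤ W(n)`: the span of `φ₁(X) ∪ ⋯ ∪ φ_n(X)`. -/
noncomputable def starV (X : Submodule F (V F n)) : Submodule F (W F n) :=
  ⨆ k : Fin n, X.map (phi F n k)

/-- For `Y ≤ W(n)`, the subspace `Y* ≤ V(n)`: the intersection `⋂ₖ φ_k⁻¹(Y)`. -/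
noncomputable def starW (Y : Submodule F (W F n)) : Submodule F (V F n) :=
  ⨅ k : Fin n, Y.comap (phi F n k)

/-- Index type for triples `(a,b,c)` with `a < b < c`. -/
abbrev TIdx (n : ℕ) := {t : Fin n × Fin n × Fin n // t.1 < t.2.1 ∧ t.2.1 < t.2.2}

/-- The element `v_{(abc)}` of `V(n)ⁿ`: the tuple whose `a`-th component is `v[c,b]`,
whose `b`-th component is `−v[c,a]`, whose `c`-th component is `v[b,a]`,
and whose remaining components are `0`. -/
noncomputable def vT (a b c : Fin n) : Fin n → V F n := fun m =>
  if m = a then v F n c b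
  else if m = b then -(v F n c a)
  else if m = c then v F n b a
  else 0

section Lemmas
variable (F : Type*) [Field F] (n : ℕ)

lemma w_apply (j i k : Fin n) (t : WIdx n) :
    w F n j i k t = if (j, i, k) = t.1 then 1 else 0 := by
  obtain ⟨⟨J, I, K⟩, ht⟩ := t
  unfold w
  by_cases h : i < j ∧ i ≤ k
  · rw [dif_pos h, Pi.single_apply]
    simp [Subtype.mk.injEq, eq_comm]
  · rw [dif_neg h, if_neg, Pi.zero_apply]
    intro he
    simp only [Prod.mk.injEq] at he
    obtain ⟨rfl, rfl, rfl⟩ := he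
    exact h ht

lemma phi_single (k : Fin n) (q : VIdx n) :
    phi F n k (Pi.single q 1) =
      if q.1.2 ≤ k then w F n q.1.1 q.1.2 k
      else w F n q.1.1 k q.1.2 - w F n q.1.2 k q.1.1 := by
  rw [phi, ← Pi.basisFun_apply, Module.Basis.constr_basis]

lemma Phi_eq (x : Fin n → V F n) : Phi F n x = ∑ k, phi F n k (x k) := by
  simp [Phi, LinearMap.sum_apply]

end Lemmas
section Lemmas2
variable (F : Type*) [Field F] (n : ℕ)

lemma phi_apply_coord (k : Fin n) (x : V F n) (t : WIdx n) :
    phi F n k x t = ∑ q : VIdx n, x q *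
      (if q.1.2 ≤ k then w F n q.1.1 q.1.2 k t
       else w F n q.1.1 k q.1.2 t - w F n q.1.2 k q.1.1 t) := by
  rw [LinearMap.pi_apply_eq_sum_univ (phi F n k) x, Finset.sum_apply]
  refine Finset.sum_congr rfl fun q _ => ?_
  have hs : (fun j => if q = j then (1:F) else 0) = Pi.single q 1 := by
    ext j; simp [Pi.single_apply, eq_comm]
  rw [Pi.smul_apply, smul_eq_mul, hs, phi_single]
  split_ifs with h <;> simp

lemma indicator_identity (J I K : Fin n) (hIJ : I < J) (hIK : I ≤ K)
    (k : Fin n) (q : VIdx n) :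
    (if q.1.2 ≤ k then w F n q.1.1 q.1.2 k ⟨(J,I,K), hIJ, hIK⟩
     else w F n q.1.1 k q.1.2 ⟨(J,I,K), hIJ, hIK⟩ - w F n q.1.2 k q.1.1 ⟨(J,I,K), hIJ, hIK⟩)
    = (if (k, q) = (K, ⟨(J,I), hIJ⟩) then 1 else 0)
      + (if h : I < K ∧ K < J then (if (k, q) = (I, (⟨(J,K), h.2⟩ : VIdx n)) then 1 else 0) else 0)
      - (if h : J < K then (if (k, q) = (I, (⟨(K,J), h⟩ : VIdx n)) then 1 else 0) else 0) := by
  obtain ⟨⟨j, i⟩, hij⟩ := q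
  have h1 := hIJ; have h2 := hIK; have h3 := hij
  simp only [w_apply, Prod.mk.injEq, Subtype.mk.injEq, Fin.lt_def, Fin.le_def, Fin.ext_iff] at *
  split_ifs <;> first | (exfalso; omega) | norm_num

end Lemmas2
section Lemmas3
variable (F : Type*) [Field F] (n : ℕ)

lemma Phi_coord (x : Fin n → V F n) (J I K : Fin n) (hIJ : I < J) (hIK : I ≤ K) :
    Phi F n x ⟨(J, I, K), hIJ, hIK⟩ =
      x K ⟨(J, I), hIJ⟩
      + (if h : I < K ∧ K < J then x I ⟨(J, K), h.2⟩ else 0)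
      - (if h : J < K then x I ⟨(K, J), h⟩ else 0) := by
  rw [Phi_eq, Finset.sum_apply]
  have step : ∀ k : Fin n, phi F n k (x k) ⟨(J,I,K), hIJ, hIK⟩ =
      ∑ q : VIdx n, x k q *
        ((if (k, q) = (K, (⟨(J,I), hIJ⟩ : VIdx n)) then 1 else 0)
         + (if h : I < K ∧ K < J then (if (k, q) = (I, (⟨(J,K), h.2⟩ : VIdx n)) then 1 else 0) else 0)
         - (if h : J < K then (if (k, q) = (I, (⟨(K,J), h⟩ : VIdx n)) then 1 else 0) else 0)) := by
    intro k
    rw [phi_apply_coord]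
    exact Finset.sum_congr rfl fun q _ => by rw [indicator_identity F n J I K hIJ hIK k q]
  simp only [step]
  by_cases hB : I < K ∧ K < J <;> by_cases hC : J < K <;>
    simp [hB, hC, mul_add, mul_sub, Finset.sum_add_distrib, Finset.sum_sub_distrib,
      Prod.mk.injEq, ite_and, mul_ite, Finset.sum_ite_eq, Finset.sum_ite_eq']

end Lemmas3
section Lemmas4
variable (F : Type*) [Field F] (n : ℕ)

lemma v_pos (j i : Fin n) (hij : i < j) : v F n j i = Pi.single (⟨(j,i), hij⟩ : VIdx n) 1 :=
  dif_pos hij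

lemma v_apply (j i : Fin n) (hij : i < j) (q : VIdx n) :
    v F n j i q = if (j, i) = q.1 then 1 else 0 := by
  obtain ⟨⟨c, b⟩, hbc⟩ := q
  rw [v_pos F n j i hij, Pi.single_apply]
  simp only [Subtype.mk.injEq]
  simp [eq_comm]

lemma vT_apply (a b c : Fin n) (hab : a < b) (hbc : b < c) (m : Fin n) (q : VIdx n) :
    vT F n a b c m q =
      (if m = a ∧ (c, b) = q.1 then 1 else 0)
      - (if m = b ∧ (c, a) = q.1 then 1 else 0)
      + (if m = c ∧ (b, a) = q.1 then 1 else 0) := by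
  obtain ⟨⟨j, i⟩, hij⟩ := q
  have hac : a < c := hab.trans hbc
  unfold vT
  have h1 := hab; have h2 := hbc; have h3 := hij; have h4 := hac
  by_cases e1 : m = a
  · rw [if_pos e1, v_apply F n c b hbc]
    subst e1
    simp only [Prod.mk.injEq, Fin.lt_def, Fin.ext_iff, true_and, and_true] at *
    split_ifs <;> first | (exfalso; omega) | norm_num
  · rw [if_neg e1]
    by_cases e2 : m = b
    · rw [if_pos e2, Pi.neg_apply, v_apply F n c a hac]
      subst e2
      simp only [Prod.mk.injEq, Fin.lt_def, Fin.ext_iff, true_and, and_true] at *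
      split_ifs <;> first | (exfalso; omega) | norm_num
    · rw [if_neg e2]
      by_cases e3 : m = c
      · rw [if_pos e3, v_apply F n b a hab]
        subst e3
        simp only [Prod.mk.injEq, Fin.lt_def, Fin.ext_iff, true_and, and_true] at *
        split_ifs <;> first | (exfalso; omega) | norm_num
      · rw [if_neg e3]
        simp only [Prod.mk.injEq, Fin.lt_def, Fin.ext_iff, true_and, and_true] at *
        split_ifs <;> first | (exfalso; omega) | norm_num

lemma vT_mem_ker (a b c : Fin n) (hab : a < b) (hbc : b < c) :
    Phi F n (vT F n a b c) = 0 := by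
  have hac : a < c := hab.trans hbc
  rw [Phi_eq]
  have hvanish : ∀ k ∈ Finset.univ \ ({a, b, c} : Finset (Fin n)),
      phi F n k (vT F n a b c k) = 0 := by
    intro k hk
    simp only [Finset.mem_sdiff, Finset.mem_insert, Finset.mem_singleton] at hk
    push_neg at hk
    obtain ⟨-, h1, h2, h3⟩ := hk
    rw [show vT F n a b c k = 0 by unfold vT; rw [if_neg h1, if_neg h2, if_neg h3]]
    exact map_zero _
  rw [← Finset.sum_subset (Finset.subset_univ ({a, b, c} : Finset (Fin n)))
    (fun k _ hk => hvanish k (Finset.mem_sdiff.2 ⟨Finset.mem_univ k, hk⟩))]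
  have hna : a ∉ ({b, c} : Finset (Fin n)) := by
    simp only [Finset.mem_insert, Finset.mem_singleton]
    push_neg
    exact ⟨hab.ne, hac.ne⟩
  have hnb : b ∉ ({c} : Finset (Fin n)) := by simp [hbc.ne]
  rw [Finset.sum_insert hna, Finset.sum_insert hnb, Finset.sum_singleton]
  have va : vT F n a b c a = v F n c b := by unfold vT; rw [if_pos rfl]
  have vb : vT F n a b c b = -(v F n c a) := by
    unfold vT; rw [if_neg hab.ne', if_pos rfl]
  have vc : vT F n a b c c = v F n b a := by
    unfold vT; rw [if_neg hac.ne', if_neg hbc.ne', if_pos rfl]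
  rw [va, vb, vc, v_pos F n c b hbc, v_pos F n c a hac, v_pos F n b a hab, map_neg]
  rw [phi_single, phi_single, phi_single]
  rw [if_neg (by exact not_le.2 hab), if_pos (by exact hab.le), if_pos (by exact hac.le)]
  abel

end Lemmas4
section Lemmas5
variable (F : Type*) [Field F] (n : ℕ)

lemma vT_coord_delta (t t' : TIdx n) :
    vT F n t'.1.1 t'.1.2.1 t'.1.2.2 t.1.1 ⟨(t.1.2.2, t.1.2.1), t.2.2⟩ =
      if t' = t then 1 else 0 := by
  obtain ⟨⟨a, b, c⟩, hab, hbc⟩ := t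
  obtain ⟨⟨a', b', c'⟩, hab', hbc'⟩ := t'
  rw [vT_apply F n a' b' c' hab' hbc']
  have h1 : a < b := hab; have h2 : b < c := hbc
  have h3 : a' < b' := hab'; have h4 : b' < c' := hbc'
  simp only [Subtype.mk.injEq, Prod.mk.injEq, Fin.lt_def, Fin.ext_iff, true_and, and_true] at *
  split_ifs <;> first | (exfalso; omega) | norm_num

lemma vT_li : LinearIndependent F (fun t : TIdx n => vT F n t.1.1 t.1.2.1 t.1.2.2) := by
  rw [Fintype.linearIndependent_iff]
  intro g hg t
  have h := congrFun (congrFun hg t.1.1) ⟨(t.1.2.2, t.1.2.1), t.2.2⟩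
  simp only [Finset.sum_apply, Pi.smul_apply, smul_eq_mul, Pi.zero_apply, vT_coord_delta,
    mul_ite, mul_one, mul_zero, Finset.sum_ite_eq, Finset.sum_ite_eq',
    Finset.mem_univ, if_true] at h
  exact h

end Lemmas5
section Lemmas6
variable (F : Type*) [Field F] (n : ℕ)

lemma vT_zero (a b c : Fin n) (hab : a < b) (hbc : b < c) (m j i : Fin n) (hij : i < j)
    (h1 : ¬(m = a ∧ c = j ∧ b = i)) (h2 : ¬(m = b ∧ c = j ∧ a = i))
    (h3 : ¬(m = c ∧ b = j ∧ a = i)) :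
    vT F n a b c m ⟨(j, i), hij⟩ = 0 := by
  have H1 : ¬(m = a ∧ (c, b) = ((⟨(j, i), hij⟩ : VIdx n) : Fin n × Fin n)) := by
    simp only [Prod.mk.injEq]; exact fun hc => h1 ⟨hc.1, hc.2.1, hc.2.2⟩
  have H2 : ¬(m = b ∧ (c, a) = ((⟨(j, i), hij⟩ : VIdx n) : Fin n × Fin n)) := by
    simp only [Prod.mk.injEq]; exact fun hc => h2 ⟨hc.1, hc.2.1, hc.2.2⟩
  have H3 : ¬(m = c ∧ (b, a) = ((⟨(j, i), hij⟩ : VIdx n) : Fin n × Fin n)) := by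
    simp only [Prod.mk.injEq]; exact fun hc => h3 ⟨hc.1, hc.2.1, hc.2.2⟩
  rw [vT_apply F n a b c hab hbc, if_neg H1, if_neg H2, if_neg H3]
  ring

lemma ker_rep (x : Fin n → V F n) (hx : Phi F n x = 0) :
    x = ∑ t : TIdx n, x t.1.2.2 ⟨(t.1.2.1, t.1.1), t.2.1⟩ • vT F n t.1.1 t.1.2.1 t.1.2.2 := by
  have E1 : ∀ (I J : Fin n) (h : I < J), x I ⟨(J, I), h⟩ = 0 := by
    intro I J h
    have h0 := congrFun hx ⟨(J, I, I), h, le_refl I⟩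
    rw [Phi_coord F n x J I I h (le_refl I), dif_neg (fun hc => lt_irrefl I hc.1),
      dif_neg (asymm h)] at h0
    simpa using h0
  have E2 : ∀ (I J : Fin n) (h : I < J), x J ⟨(J, I), h⟩ = 0 := by
    intro I J h
    have h0 := congrFun hx ⟨(J, I, J), h, h.le⟩
    rw [Phi_coord F n x J I J h h.le, dif_neg (fun hc => lt_irrefl J hc.2),
      dif_neg (lt_irrefl J)] at h0
    simpa using h0
  have E3 : ∀ (I K J : Fin n) (h1 : I < K) (h2 : K < J),
      x K ⟨(J, I), h1.trans h2⟩ + x I ⟨(J, K), h2⟩ = 0 := by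
    intro I K J h1 h2
    have h0 := congrFun hx ⟨(J, I, K), h1.trans h2, h1.le⟩
    rw [Phi_coord F n x J I K (h1.trans h2) h1.le, dif_pos ⟨h1, h2⟩,
      dif_neg (asymm h2)] at h0
    simp only [Pi.zero_apply] at h0
    linear_combination h0
  have E4 : ∀ (I J K : Fin n) (h1 : I < J) (h2 : J < K),
      x K ⟨(J, I), h1⟩ = x I ⟨(K, J), h2⟩ := by
    intro I J K h1 h2
    have h0 := congrFun hx ⟨(J, I, K), h1, (h1.trans h2).le⟩
    rw [Phi_coord F n x J I K h1 (h1.trans h2).le,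
      dif_neg (fun hc => asymm h2 hc.2), dif_pos h2] at h0
    simp only [Pi.zero_apply] at h0
    linear_combination h0
  funext m q
  obtain ⟨⟨j, i⟩, hij⟩ := q
  simp only [Finset.sum_apply, Pi.smul_apply, smul_eq_mul]
  have hij' : i < j := hij
  rcases lt_trichotomy m i with hmi | rfl | him
  · -- m < i, the triple is (m, i, j)
    have hz : ∀ t' : TIdx n, t' ∈ Finset.univ → t' ≠ (⟨(m, i, j), hmi, hij'⟩ : TIdx n) →
        x t'.1.2.2 ⟨(t'.1.2.1, t'.1.1), t'.2.1⟩ *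
          vT F n t'.1.1 t'.1.2.1 t'.1.2.2 m ⟨(j, i), hij⟩ = 0 := by
      rintro ⟨⟨a, b, c⟩, hab, hbc⟩ - hne
      have hab' : a < b := hab; have hbc' : b < c := hbc
      have hne' : ¬((a:ℕ) = m ∧ (b:ℕ) = i ∧ (c:ℕ) = j) := by
        simpa [Subtype.ext_iff, Prod.ext_iff, Fin.ext_iff] using hne
      refine mul_eq_zero_of_right _ (vT_zero F n a b c hab hbc m j i hij ?_ ?_ ?_) <;>
      · simp only [not_and, Fin.ext_iff]
        have g1 : (a:ℕ) < b := hab'; have g2 : (b:ℕ) < c := hbc'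
        have g3 : (i:ℕ) < j := hij'; have g4 : (m:ℕ) < i := hmi
        omega
    rw [Finset.sum_eq_single_of_mem _ (Finset.mem_univ _) hz]
    rw [vT_apply F n m i j hmi hij', if_pos ⟨rfl, rfl⟩,
      if_neg (fun hc => absurd hc.1 hmi.ne), if_neg (fun hc => absurd hc.1 (hmi.trans hij').ne)]
    linear_combination -(E4 m i j hmi hij')
  · -- m = i
    rw [Finset.sum_eq_zero]
    · exact E1 m j hij'
    · rintro ⟨⟨a, b, c⟩, hab, hbc⟩ -
      have hab' : a < b := hab; have hbc' : b < c := hbc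
      refine mul_eq_zero_of_right _ (vT_zero F n a b c hab hbc m j m hij ?_ ?_ ?_) <;>
      · simp only [not_and, Fin.ext_iff]
        have g1 : (a:ℕ) < b := hab'; have g2 : (b:ℕ) < c := hbc'
        have g3 : (m:ℕ) < j := hij'
        omega
  · rcases lt_trichotomy m j with hmj | rfl | hjm
    · -- i < m < j, the triple is (i, m, j)
      have hz : ∀ t' : TIdx n, t' ∈ Finset.univ → t' ≠ (⟨(i, m, j), him, hmj⟩ : TIdx n) →
          x t'.1.2.2 ⟨(t'.1.2.1, t'.1.1), t'.2.1⟩ *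
            vT F n t'.1.1 t'.1.2.1 t'.1.2.2 m ⟨(j, i), hij⟩ = 0 := by
        rintro ⟨⟨a, b, c⟩, hab, hbc⟩ - hne
        have hab' : a < b := hab; have hbc' : b < c := hbc
        have hne' : ¬((a:ℕ) = i ∧ (b:ℕ) = m ∧ (c:ℕ) = j) := by
          simpa [Subtype.ext_iff, Prod.ext_iff, Fin.ext_iff] using hne
        refine mul_eq_zero_of_right _ (vT_zero F n a b c hab hbc m j i hij ?_ ?_ ?_) <;>
        · simp only [not_and, Fin.ext_iff]
          have g1 : (a:ℕ) < b := hab'; have g2 : (b:ℕ) < c := hbc'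
          have g3 : (i:ℕ) < j := hij'; have g4 : (i:ℕ) < m := him
          have g5 : (m:ℕ) < j := hmj
          omega
      rw [Finset.sum_eq_single_of_mem _ (Finset.mem_univ _) hz]
      rw [vT_apply F n i m j him hmj, if_neg (fun hc => absurd hc.1 him.ne'),
        if_pos ⟨rfl, rfl⟩, if_neg (fun hc => absurd hc.1 hmj.ne)]
      linear_combination (E3 i m j him hmj) + (E4 i m j him hmj)
    · -- m = j
      rw [Finset.sum_eq_zero]
      · exact E2 i m hij'
      · rintro ⟨⟨a, b, c⟩, hab, hbc⟩ -
        have hab' : a < b := hab; have hbc' : b < c := hbc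
        refine mul_eq_zero_of_right _ (vT_zero F n a b c hab hbc m m i hij ?_ ?_ ?_) <;>
        · simp only [not_and, Fin.ext_iff]
          have g1 : (a:ℕ) < b := hab'; have g2 : (b:ℕ) < c := hbc'
          have g3 : (i:ℕ) < m := hij'
          omega
    · -- j < m, the triple is (i, j, m)
      have hz : ∀ t' : TIdx n, t' ∈ Finset.univ → t' ≠ (⟨(i, j, m), hij', hjm⟩ : TIdx n) →
          x t'.1.2.2 ⟨(t'.1.2.1, t'.1.1), t'.2.1⟩ *
            vT F n t'.1.1 t'.1.2.1 t'.1.2.2 m ⟨(j, i), hij⟩ = 0 := by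
        rintro ⟨⟨a, b, c⟩, hab, hbc⟩ - hne
        have hab' : a < b := hab; have hbc' : b < c := hbc
        have hne' : ¬((a:ℕ) = i ∧ (b:ℕ) = j ∧ (c:ℕ) = m) := by
          simpa [Subtype.ext_iff, Prod.ext_iff, Fin.ext_iff] using hne
        refine mul_eq_zero_of_right _ (vT_zero F n a b c hab hbc m j i hij ?_ ?_ ?_) <;>
        · simp only [not_and, Fin.ext_iff]
          have g1 : (a:ℕ) < b := hab'; have g2 : (b:ℕ) < c := hbc'
          have g3 : (i:ℕ) < j := hij'; have g4 : (j:ℕ) < m := hjm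
          omega
      rw [Finset.sum_eq_single_of_mem _ (Finset.mem_univ _) hz]
      rw [vT_apply F n i j m hij' hjm, if_neg (fun hc => absurd hc.1 (him.ne')),
        if_neg (fun hc => absurd hc.1 hjm.ne'), if_pos ⟨rfl, rfl⟩]
      ring

end Lemmas6
section Lemmas7
variable (n : ℕ)

lemma sort3 (x y z : Fin n) (hxy : x ≠ y) (hxz : x ≠ z) (hyz : y ≠ z) :
    ∃ a b c : Fin n, a < b ∧ b < c ∧ ({a, b, c} : Finset (Fin n)) = {x, y, z} := by
  rcases lt_trichotomy x y with h1 | h1 | h1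
  · rcases lt_trichotomy z x with h2 | h2 | h2
    · exact ⟨z, x, y, h2, h1, by ext u; simp only [Finset.mem_insert, Finset.mem_singleton]; tauto⟩
    · exact absurd h2.symm hxz
    · rcases lt_trichotomy z y with h3 | h3 | h3
      · exact ⟨x, z, y, h2, h3, by ext u; simp only [Finset.mem_insert, Finset.mem_singleton]; tauto⟩
      · exact absurd h3 hyz.symm
      · exact ⟨x, y, z, h1, h3, rfl⟩
  · exact absurd h1 hxy
  · rcases lt_trichotomy z y with h2 | h2 | h2
    · exact ⟨z, y, x, h2, h1, by ext u; simp only [Finset.mem_insert, Finset.mem_singleton]; tauto⟩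
    · exact absurd h2.symm hyz
    · rcases lt_trichotomy z x with h3 | h3 | h3
      · exact ⟨y, z, x, h2, h3, by ext u; simp only [Finset.mem_insert, Finset.mem_singleton]; tauto⟩
      · exact absurd h3.symm hxz
      · exact ⟨y, x, z, h1, h3, by ext u; simp only [Finset.mem_insert, Finset.mem_singleton]; tauto⟩

def tidxFinset (t : TIdx n) : {s : Finset (Fin n) // s.card = 3} :=
    ⟨{t.1.1, t.1.2.1, t.1.2.2}, by
      obtain ⟨⟨a, b, c⟩, hab, hbc⟩ := t
      have hab' : a < b := hab; have hbc' : b < c := hbc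
      rw [Finset.card_insert_of_notMem (by
          simp only [Finset.mem_insert, Finset.mem_singleton]
          push_neg
          exact ⟨hab'.ne, (hab'.trans hbc').ne⟩),
        Finset.card_insert_of_notMem (by simp [hbc'.ne]), Finset.card_singleton]⟩

lemma card_tidx : Fintype.card (TIdx n) = n.choose 3 := by
  set f := tidxFinset n with hf
  have hinj : Function.Injective f := by
    rintro ⟨⟨a, b, c⟩, hab, hbc⟩ ⟨⟨a', b', c'⟩, hab', hbc'⟩ h
    simp only [hf, tidxFinset, Subtype.mk.injEq] at h
    have m1 : a' ∈ ({a, b, c} : Finset (Fin n)) := h ▸ (by simp)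
    have m2 : b' ∈ ({a, b, c} : Finset (Fin n)) := h ▸ (by simp)
    have m3 : c' ∈ ({a, b, c} : Finset (Fin n)) := h ▸ (by simp)
    simp only [Finset.mem_insert, Finset.mem_singleton, Fin.ext_iff] at m1 m2 m3
    have g1 : (a:ℕ) < b := hab; have g2 : (b:ℕ) < c := hbc
    have g3 : (a':ℕ) < b' := hab'; have g4 : (b':ℕ) < c' := hbc'
    simp only [Subtype.mk.injEq, Prod.mk.injEq, Fin.ext_iff]
    omega
  have hsurj : Function.Surjective f := by
    rintro ⟨s, hs⟩
    obtain ⟨x, y, z, hxy, hxz, hyz, rfl⟩ := Finset.card_eq_three.1 hs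
    obtain ⟨a, b, c, hab, hbc, hset⟩ := sort3 n x y z hxy hxz hyz
    exact ⟨⟨(a, b, c), hab, hbc⟩, Subtype.ext hset⟩
  rw [Fintype.card_congr (Equiv.ofBijective f ⟨hinj, hsurj⟩), Fintype.card_finset_len,
    Fintype.card_fin]

end Lemmas7
/-- The kernel of `Φ_n` has dimension `C(n,3)`, and the vectors `v_{(abc)}`,
`1 ≤ a < b < c ≤ n`, form a basis of `ker(Φ_n)`. -/
theorem statement5 (p : ℕ) [Fact p.Prime] (hp2 : p ≠ 2) (n : ℕ) (hn : 1 < n) :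
    Module.finrank (ZMod p) ↥(LinearMap.ker (Phi (ZMod p) n)) = n.choose 3 ∧
    LinearIndependent (ZMod p)
      (fun t : TIdx n => vT (ZMod p) n t.1.1 t.1.2.1 t.1.2.2) ∧
    Submodule.span (ZMod p)
        (Set.range fun t : TIdx n => vT (ZMod p) n t.1.1 t.1.2.1 t.1.2.2) =
      LinearMap.ker (Phi (ZMod p) n) := by
  have hli := vT_li (ZMod p) n
  have hspan : Submodule.span (ZMod p)
      (Set.range fun t : TIdx n => vT (ZMod p) n t.1.1 t.1.2.1 t.1.2.2)
      = LinearMap.ker (Phi (ZMod p) n) := by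
    apply le_antisymm
    · rw [Submodule.span_le]
      rintro _ ⟨t, rfl⟩
      simp only [SetLike.mem_coe, LinearMap.mem_ker]
      exact vT_mem_ker (ZMod p) n _ _ _ t.2.1 t.2.2
    · intro x hx
      rw [LinearMap.mem_ker] at hx
      rw [ker_rep (ZMod p) n x hx]
      exact Submodule.sum_mem _ fun t _ => Submodule.smul_mem _ _
        (Submodule.subset_span ⟨t, rfl⟩)
  refine ⟨?_, hli, hspan⟩
  rw [← hspan, finrank_span_eq_card hli, card_tidx]
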